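/- If 0 < αI ≼ P ≼ βI for a symmetric matrix P ∈ ℝ^{d×d} and u ∈ ℝ^d with u ≠ 0, R > 0, then the Kalman gain K = P u (R + uᵀ P u)^{-1} satisfies α‖u‖/(R + β‖u‖²) ≤ ‖K‖ ≤ β‖u‖/(R + α‖u‖²); in particular K ≠ 0. -/

import Mathlib

/-!
Since `K = Pu / (R + uᵀPu)`, it suffices to bound numerator and denominator separately. The
denominator lies between `R + α‖u‖²` and `R + β‖u‖²`. For the numerator, Cauchy–Schwarz gives
`α‖u‖² ≤ uᵀPu ≤ ‖u‖ ‖Pu‖`, hence `α‖u‖ ≤ ‖Pu‖`, and `‖Pu‖² ≤ β uᵀPu ≤ β ‖u‖ ‖Pu‖`, hence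
`‖Pu‖ ≤ β‖u‖`.
-/

open Matrix

noncomputable def eucNorm {d : ℕ} (v : Fin d → ℝ) : ℝ := Real.sqrt (∑ i, v i ^ 2)

section eucNorm

variable {d : ℕ}

lemma eucNorm_nonneg (v : Fin d → ℝ) : 0 ≤ eucNorm v := Real.sqrt_nonneg _

lemma eucNorm_sq (v : Fin d → ℝ) : eucNorm v ^ 2 = v ⬝ᵥ v := by
  rw [eucNorm, Real.sq_sqrt (by positivity)]
  simp only [dotProduct, sq]

lemma eucNorm_pos {v : Fin d → ℝ} (hv : v ≠ 0) : 0 < eucNorm v := by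
  refine (eucNorm_nonneg v).lt_of_ne fun h => hv ?_
  rw [← dotProduct_self_eq_zero, ← eucNorm_sq, ← h, zero_pow two_ne_zero]

lemma eucNorm_smul (c : ℝ) (v : Fin d → ℝ) : eucNorm (c • v) = |c| * eucNorm v := by
  simp only [eucNorm, Pi.smul_apply, smul_eq_mul, mul_pow, ← Finset.mul_sum]
  rw [Real.sqrt_mul (sq_nonneg c), Real.sqrt_sq_eq_abs]

lemma dotProduct_le_eucNorm_mul (u v : Fin d → ℝ) : u ⬝ᵥ v ≤ eucNorm u * eucNorm v :=
  Real.sum_mul_le_sqrt_mul_sqrt _ u v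

end eucNorm

namespace Matrix

variable {n : Type*} {P : Matrix n n ℝ} {α β : ℝ}

lemma PosSemidef.of_sub_smul_one [DecidableEq n] (hα : 0 ≤ α) (h : (P - α • 1).PosSemidef) :
    P.PosSemidef := by
  simpa using h.add (PosSemidef.one.smul hα)

variable [Fintype n]

lemma IsHermitian.dotProduct_mulVec_comm (hP : P.IsHermitian) (x y : n → ℝ) :
    x ⬝ᵥ P *ᵥ y = P *ᵥ x ⬝ᵥ y := by
  rw [dotProduct_mulVec, ← mulVec_transpose, ← conjTranspose_eq_transpose_of_trivial, hP.eq]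

variable [DecidableEq n]

lemma PosSemidef.mul_dotProduct_self_le (h : (P - α • 1).PosSemidef) (u : n → ℝ) :
    α * (u ⬝ᵥ u) ≤ u ⬝ᵥ P *ᵥ u := by
  have := h.dotProduct_mulVec_nonneg u
  simp only [star_trivial, sub_mulVec, smul_mulVec, one_mulVec, dotProduct_sub,
    dotProduct_smul, smul_eq_mul] at this
  linarith

lemma PosSemidef.dotProduct_mulVec_le (h : (β • 1 - P).PosSemidef) (u : n → ℝ) :
    u ⬝ᵥ P *ᵥ u ≤ β * (u ⬝ᵥ u) := by
  have := h.dotProduct_mulVec_nonneg u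
  simp only [star_trivial, sub_mulVec, smul_mulVec, one_mulVec, dotProduct_sub,
    dotProduct_smul, smul_eq_mul] at this
  linarith

/-- With `Q = βI - P`, `(Pu)ᵀ Q (Pu) + (Qu)ᵀ P (Qu) = β (β uᵀPu - ‖Pu‖²)`, and both
terms on the left are nonnegative. -/
lemma PosSemidef.mulVec_dotProduct_self_le (hP : P.PosSemidef) (hβ : 0 < β)
    (h : (β • 1 - P).PosSemidef) (u : n → ℝ) :
    P *ᵥ u ⬝ᵥ P *ᵥ u ≤ β * (u ⬝ᵥ P *ᵥ u) := by
  have hPQ := h.dotProduct_mulVec_nonneg (P *ᵥ u)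
  have hQP := hP.dotProduct_mulVec_nonneg ((β • 1 - P) *ᵥ u)
  have hPPu : u ⬝ᵥ P *ᵥ P *ᵥ u = P *ᵥ u ⬝ᵥ P *ᵥ u :=
    hP.isHermitian.dotProduct_mulVec_comm u (P *ᵥ u)
  simp only [star_trivial, sub_mulVec, smul_mulVec, one_mulVec, dotProduct_sub, sub_dotProduct,
    dotProduct_smul, smul_dotProduct, mulVec_sub, mulVec_smul, smul_eq_mul, hPPu] at hPQ hQP
  have : 0 ≤ β * (β * (u ⬝ᵥ P *ᵥ u) - P *ᵥ u ⬝ᵥ P *ᵥ u) := by linarith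
  linarith [(mul_nonneg_iff_of_pos_left hβ).mp this]

end Matrix

section NormBounds

variable {d : ℕ} {P : Matrix (Fin d) (Fin d) ℝ} {α β : ℝ}

lemma mul_eucNorm_le_eucNorm_mulVec (h : (P - α • 1).PosSemidef) (u : Fin d → ℝ) :
    α * eucNorm u ≤ eucNorm (P *ᵥ u) := by
  rcases (eucNorm_nonneg u).eq_or_lt with hu | hu
  · rw [← hu, mul_zero]
    exact eucNorm_nonneg _
  refine le_of_mul_le_mul_right ?_ hu
  calc α * eucNorm u * eucNorm u = α * (u ⬝ᵥ u) := by rw [← eucNorm_sq]; ring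
    _ ≤ u ⬝ᵥ P *ᵥ u := h.mul_dotProduct_self_le u
    _ ≤ eucNorm u * eucNorm (P *ᵥ u) := dotProduct_le_eucNorm_mul _ _
    _ = eucNorm (P *ᵥ u) * eucNorm u := mul_comm _ _

lemma eucNorm_mulVec_le (hP : P.PosSemidef) (hβ : 0 < β) (h : (β • 1 - P).PosSemidef)
    (u : Fin d → ℝ) : eucNorm (P *ᵥ u) ≤ β * eucNorm u := by
  rcases (eucNorm_nonneg (P *ᵥ u)).eq_or_lt with hPu | hPu
  · rw [← hPu]
    exact mul_nonneg hβ.le (eucNorm_nonneg u)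
  refine le_of_mul_le_mul_right ?_ hPu
  calc eucNorm (P *ᵥ u) * eucNorm (P *ᵥ u) = P *ᵥ u ⬝ᵥ P *ᵥ u := by rw [← eucNorm_sq]; ring
    _ ≤ β * (u ⬝ᵥ P *ᵥ u) := hP.mulVec_dotProduct_self_le hβ h u
    _ ≤ β * (eucNorm u * eucNorm (P *ᵥ u)) := by gcongr; exact dotProduct_le_eucNorm_mul _ _
    _ = β * eucNorm u * eucNorm (P *ᵥ u) := by ring

end NormBounds

theorem stmt_6_general (d : ℕ) (P : Matrix (Fin d) (Fin d) ℝ)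
    (α β R : ℝ) (hα : 0 < α) (hβ : 0 < β) (hR : 0 < R)
    (hlow : (P - α • (1 : Matrix (Fin d) (Fin d) ℝ)).PosSemidef)
    (hhigh : ((β • (1 : Matrix (Fin d) (Fin d) ℝ)) - P).PosSemidef)
    (u : Fin d → ℝ) (hu : u ≠ 0)
    (K : Fin d → ℝ) (hK : K = (R + u ⬝ᵥ P *ᵥ u)⁻¹ • (P *ᵥ u)) :
    α * eucNorm u / (R + β * (eucNorm u) ^ 2) ≤ eucNorm K ∧
    eucNorm K ≤ β * eucNorm u / (R + α * (eucNorm u) ^ 2) ∧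
    K ≠ 0 := by
  have hq_low : α * eucNorm u ^ 2 ≤ u ⬝ᵥ P *ᵥ u := by
    rw [eucNorm_sq]; exact hlow.mul_dotProduct_self_le u
  have hq_high : u ⬝ᵥ P *ᵥ u ≤ β * eucNorm u ^ 2 := by
    rw [eucNorm_sq]; exact hhigh.dotProduct_mulVec_le u
  have hu_pos : 0 < eucNorm u := eucNorm_pos hu
  have hden : 0 < R + u ⬝ᵥ P *ᵥ u := by linarith [mul_pos hα (pow_pos hu_pos 2)]
  have hK_norm : eucNorm K = eucNorm (P *ᵥ u) / (R + u ⬝ᵥ P *ᵥ u) := by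
    rw [hK, eucNorm_smul, abs_of_pos (inv_pos.mpr hden), inv_mul_eq_div]
  have hK_low : α * eucNorm u / (R + β * eucNorm u ^ 2) ≤ eucNorm K := by
    rw [hK_norm]
    exact div_le_div₀ (eucNorm_nonneg _) (mul_eucNorm_le_eucNorm_mulVec hlow u) hden
      (by linarith)
  refine ⟨hK_low, ?_, ?_⟩
  · rw [hK_norm]
    exact div_le_div₀ (by positivity)
      (eucNorm_mulVec_le (hlow.of_sub_smul_one hα.le) hβ hhigh u) (by positivity) (by linarith)
  · refine fun hK0 => (lt_of_lt_of_le (by positivity) hK_low).ne' ?_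
    simp [hK0, eucNorm]

/-- Bounds on the norm of the Kalman gain when αI ⪯ P ⪯ βI. -/
theorem stmt_6 (d : ℕ) (P : Matrix (Fin d) (Fin d) ℝ) (hPsymm : P.IsSymm)
    (α β R : ℝ) (hα : 0 < α) (hβ : 0 < β) (hR : 0 < R)
    (hlow : (P - α • (1 : Matrix (Fin d) (Fin d) ℝ)).PosSemidef)
    (hhigh : ((β • (1 : Matrix (Fin d) (Fin d) ℝ)) - P).PosSemidef)
    (u : Fin d → ℝ) (hu : u ≠ 0)
    (K : Fin d → ℝ) (hK : K = (R + u ⬝ᵥ P *ᵥ u)⁻¹ • (P *ᵥ u)) :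
    α * eucNorm u / (R + β * (eucNorm u) ^ 2) ≤ eucNorm K ∧
    eucNorm K ≤ β * eucNorm u / (R + α * (eucNorm u) ^ 2) ∧
    K ≠ 0 :=
  stmt_6_general d P α β R hα hβ hR hlow hhigh u hu K hK
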